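/- arXiv:1712.00579 — 2 statements merged into one kernel-verified Lean document; each statement's English description precedes it below -/
import Mathlib

section
/- Let P be an irreducible row-stochastic S×S real matrix with stationary distribution μ and mean first passage times T_{ij}, and suppose T_{ij} ≤ D′ for all i, j. Fix an index n, let p_nᵀ denote the n-th row of P and e_n the n-th standard basis column vector, and suppose the matrix I − P + e_n p_nᵀ is invertible with inverse G. Then |G_{ij} − G_{jj}| ≤ 2 μ_j D′ for all i, j. -/
/-- A row-stochastic matrix: nonnegative entries, each row sums to 1. -/
def RowStochastic {S : ℕ} (P : Matrix (Fin S) (Fin S) ℝ) : Prop :=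
  (∀ i j, 0 ≤ P i j) ∧ ∀ i, ∑ j, P i j = 1

/-- Irreducibility of a Markov transition matrix: every state reaches every state. -/
def MCIrreducible {S : ℕ} (P : Matrix (Fin S) (Fin S) ℝ) : Prop :=
  ∀ i j, ∃ n : ℕ, 1 ≤ n ∧ 0 < (P ^ n) i j

/-- `μ` is a stationary distribution of `P`. -/
def IsStationaryDist {S : ℕ} (P : Matrix (Fin S) (Fin S) ℝ) (μ : Fin S → ℝ) : Prop :=
  (∀ j, 0 ≤ μ j) ∧ (∑ j, μ j = 1) ∧ ∀ j, ∑ i, μ i * P i j = μ j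

/-- `T` is the matrix of mean first passage times of `P`: the unique positive
solution of `T i j = 1 + ∑_{k ≠ j} P i k * T k j`. -/
def IsMFPT {S : ℕ} (P T : Matrix (Fin S) (Fin S) ℝ) : Prop :=
  (∀ i j, 0 < T i j) ∧
    ∀ i j, T i j = 1 + ∑ k ∈ Finset.univ.filter (fun k => k ≠ j), P i k * T k j

/-- The rank-one matrix `e_n p_nᵀ`, whose `n`-th row is the `n`-th row of `P`
and whose other rows vanish. -/
def rankOneRow {S : ℕ} (P : Matrix (Fin S) (Fin S) ℝ) (n : Fin S) :
    Matrix (Fin S) (Fin S) ℝ :=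
  Matrix.of fun i j => if i = n then P n j else 0

/-!
Write `A = 1 - P + e_n p_nᵀ`, `r = G 𝟙`, and let `Z` be `T` with its diagonal replaced by `0`.
Since `A 𝟙 = e_n`, the `n`-th column of `G` is `𝟙`. The first-passage equations read
`(1 - P) Z = 𝟙𝟙ᵀ - diag T`, so `A Z = 𝟙𝟙ᵀ - diag T + e_n (T_{n·} - 𝟙)ᵀ`, and multiplying by `G`
gives `Z_ij = r_i - G_ij T_jj + T_nj - 1`. Comparing columns `j` and `n` eliminates `r`:
`T_jj (G_jj - G_ij) = Z_ij + Z_jn - Z_in`, which lies in `[-D′, 2D′]`. Finally Kac's formula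
`μ_j T_jj = 1` follows by applying `μᵀ`, which annihilates `1 - P`, to the first-passage equations.
-/

open Matrix

section

variable {S : ℕ} {P T G : Matrix (Fin S) (Fin S) ℝ}

def meanHittingTimes (T : Matrix (Fin S) (Fin S) ℝ) : Matrix (Fin S) (Fin S) ℝ :=
  of fun i j => if i = j then 0 else T i j

theorem meanHittingTimes_self (T : Matrix (Fin S) (Fin S) ℝ) (j : Fin S) :
    meanHittingTimes T j j = 0 :=
  if_pos rfl

theorem meanHittingTimes_nonneg (hT : ∀ i j, 0 ≤ T i j) (i j : Fin S) :
    0 ≤ meanHittingTimes T i j := by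
  rw [meanHittingTimes, of_apply]
  split_ifs
  exacts [le_rfl, hT i j]

theorem meanHittingTimes_le {D : ℝ} (hT : ∀ i j, 0 ≤ T i j) (hTD : ∀ i j, T i j ≤ D)
    (i j : Fin S) : meanHittingTimes T i j ≤ D := by
  rw [meanHittingTimes, of_apply]
  split_ifs
  exacts [(hT i j).trans (hTD i j), hTD i j]

theorem rankOneRow_eq_vecMulVec (P : Matrix (Fin S) (Fin S) ℝ) (n : Fin S) :
    rankOneRow P n = vecMulVec (Pi.single n 1) (P n) := by
  ext i j
  by_cases h : i = n <;> simp [rankOneRow, vecMulVec_apply, h]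

theorem RowStochastic.mulVec_one (hP : RowStochastic P) : P *ᵥ 1 = 1 :=
  funext fun i => by simpa [mulVec, dotProduct] using hP.2 i

theorem RowStochastic.one_sub_add_rankOneRow_mulVec_one (hP : RowStochastic P) (n : Fin S) :
    (1 - P + rankOneRow P n) *ᵥ 1 = Pi.single n 1 := by
  have hn : P n ⬝ᵥ 1 = 1 := congrFun hP.mulVec_one n
  ext i
  by_cases h : i = n <;>
    simp [add_mulVec, sub_mulVec, hP.mulVec_one, rankOneRow_eq_vecMulVec, vecMulVec_mulVec, hn, h]

theorem RowStochastic.apply_eq_one_of_mul_eq_one (hP : RowStochastic P) {n : Fin S}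
    (hG : G * (1 - P + rankOneRow P n) = 1) (i : Fin S) : G i n = 1 := by
  have h := congrFun (congrArg (· *ᵥ (1 : Fin S → ℝ)) hG) i
  simpa [← mulVec_mulVec, hP.one_sub_add_rankOneRow_mulVec_one, mulVec_single_one] using h

theorem IsMFPT.mul_meanHittingTimes (hT : IsMFPT P T) :
    P * meanHittingTimes T = of fun i j => T i j - 1 := by
  ext i j
  rw [of_apply, hT.2 i j]
  simp [mul_apply, meanHittingTimes, Finset.sum_filter, mul_ite]

theorem IsMFPT.one_sub_mul_meanHittingTimes (hT : IsMFPT P T) :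
    (1 - P) * meanHittingTimes T = of (fun _ _ => 1) - diagonal T.diag := by
  ext i j
  rw [sub_mul, Matrix.one_mul, hT.mul_meanHittingTimes]
  by_cases h : i = j <;> simp [meanHittingTimes, h]

theorem IsStationaryDist.vecMul_eq {μ : Fin S → ℝ} (hμ : IsStationaryDist P μ) : μ ᵥ* P = μ :=
  funext hμ.2.2

theorem IsStationaryDist.mul_apply_self_eq_one {μ : Fin S → ℝ} (hμ : IsStationaryDist P μ)
    (hT : IsMFPT P T) (j : Fin S) : μ j * T j j = 1 := by
  have h := congrFun (congrArg (μ ᵥ* ·) hT.one_sub_mul_meanHittingTimes) j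
  rw [← vecMul_vecMul, vecMul_sub, vecMul_one, hμ.vecMul_eq, sub_self, zero_vecMul] at h
  simp only [vecMul, dotProduct, Pi.zero_apply, Matrix.sub_apply, of_apply, diagonal_apply,
    diag_apply, mul_sub, mul_one, mul_ite, mul_zero, Finset.sum_sub_distrib, Finset.sum_ite_eq',
    Finset.mem_univ, if_true, hμ.2.1] at h
  linarith

theorem meanHittingTimes_eq_of_mul_eq_one (hT : IsMFPT P T) {n : Fin S}
    (hG : G * (1 - P + rankOneRow P n) = 1) (i j : Fin S) :
    meanHittingTimes T i j = ∑ k, G i k - G i j * T j j + G i n * (T n j - 1) := by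
  have hrow : P n ᵥ* meanHittingTimes T = fun j => T n j - 1 :=
    funext fun j => by rw [← mul_apply_eq_vecMul, hT.mul_meanHittingTimes, of_apply]
  have h := congrArg (G * ·) <| congrArg (· + rankOneRow P n * meanHittingTimes T)
    hT.one_sub_mul_meanHittingTimes
  simp only [← add_mul, ← Matrix.mul_assoc, hG, Matrix.one_mul] at h
  rw [h, rankOneRow_eq_vecMulVec, vecMulVec_mul, hrow, Matrix.mul_add, Matrix.mul_sub,
    mul_vecMulVec, mulVec_single_one]
  simp [mul_apply, diagonal_apply, vecMulVec_apply]

theorem diag_sub_mul_eq_of_mul_eq_one (hP : RowStochastic P) (hT : IsMFPT P T) {n : Fin S}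
    (hG : G * (1 - P + rankOneRow P n) = 1) (i j : Fin S) :
    T j j * (G j j - G i j) =
      meanHittingTimes T i j + meanHittingTimes T j n - meanHittingTimes T i n := by
  have hZ := meanHittingTimes_eq_of_mul_eq_one hT hG
  have hcol := hP.apply_eq_one_of_mul_eq_one hG
  linear_combination hZ j j - hZ i j + hZ i n - hZ j n - meanHittingTimes_self T j
    + T n j * (hcol j - hcol i)

end

theorem g_inverse_entry_bound_general
    {S : ℕ}
    (P : Matrix (Fin S) (Fin S) ℝ)
    (hP : RowStochastic P)
    (μ : Fin S → ℝ) (hμ : IsStationaryDist P μ)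
    (T : Matrix (Fin S) (Fin S) ℝ) (hT : IsMFPT P T)
    (D' : ℝ)
    (hTD : ∀ i j, T i j ≤ D')
    (n : Fin S)
    (G : Matrix (Fin S) (Fin S) ℝ)
    (hG₂ : G * (1 - P + rankOneRow P n) = 1) :
    ∀ i j, |G i j - G j j| ≤ 2 * μ j * D' := by
  intro i j
  have hT0 : ∀ i j, 0 ≤ T i j := fun i j => (hT.1 i j).le
  have hZ0 := meanHittingTimes_nonneg hT0
  have hZD := meanHittingTimes_le hT0 hTD
  set Z := meanHittingTimes T
  have hGZ : G i j - G j j = -(μ j * (Z i j + Z j n - Z i n)) := by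
    rw [← diag_sub_mul_eq_of_mul_eq_one hP hT hG₂, ← mul_assoc, hμ.mul_apply_self_eq_one hT]
    ring
  rw [hGZ, abs_neg, abs_mul, abs_of_nonneg (hμ.1 j), mul_comm 2 (μ j), mul_assoc]
  refine mul_le_mul_of_nonneg_left ?_ (hμ.1 j)
  rw [abs_le]
  constructor <;> linarith [hZ0 i j, hZ0 j n, hZ0 i n, hZD i j, hZD j n, hZD i n]

/-- Bound on the entries of the g-inverse `G = (I − P + e_n p_nᵀ)⁻¹`:
if all mean first passage times are at most `D′`, then `|G_{ij} − G_{jj}| ≤ 2 μ_j D′`. -/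
theorem g_inverse_entry_bound
    {S : ℕ}
    (P : Matrix (Fin S) (Fin S) ℝ)
    (hP : RowStochastic P) (hirr : MCIrreducible P)
    (μ : Fin S → ℝ) (hμ : IsStationaryDist P μ)
    (T : Matrix (Fin S) (Fin S) ℝ) (hT : IsMFPT P T)
    (D' : ℝ) (hD' : 1 ≤ D')
    (hTD : ∀ i j, T i j ≤ D')
    (n : Fin S)
    (G : Matrix (Fin S) (Fin S) ℝ)
    (hG₁ : (1 - P + rankOneRow P n) * G = 1)
    (hG₂ : G * (1 - P + rankOneRow P n) = 1) :
    ∀ i j, |G i j - G j j| ≤ 2 * μ j * D' :=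
  g_inverse_entry_bound_general P hP μ hμ T hT D' hTD n G hG₂
end

section
/- Let P and P̃ be irreducible row-stochastic S×S real matrices that differ only in their n-th row (i.e., P_{ik} = P̃_{ik} for all i ≠ n and all k). Let μ, μ̃ be their stationary distributions, let T_{ij}, T̃_{ij} be their mean first passage times, and set E = P̃ − P. If T_{ij} ≤ D′ for all i, j, then for all i ≠ j, |T̃_{ij} − T_{ij}| ≤ (μ_j / μ̃_j) · ‖E‖_∞ · S · D′². -/
/-- The entrywise max-norm ‖E‖_∞ of a matrix. -/
noncomputable def matNormInf {S : ℕ} (E : Matrix (Fin S) (Fin S) ℝ) : ℝ :=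
  ⨆ i, ⨆ j, |E i j|

/-!
Fix the target `j` and let `Q = updateCol P j 0`, `Q̃ = updateCol P̃ j 0` be the chains killed on
entering `j`; the columns `T·j`, `T̃·j` solve `(1 - Q) x = 1` and `(1 - Q̃) x = 1`. As `Q` and `Q̃`
differ only in row `n`, `T̃·j - T·j` is `c = ((Q̃ - Q) T·j)ₙ` times the `n`-th column of
`(1 - Q̃)⁻¹`, and `|c| ≤ S ‖E‖ D'/2` because the rows of `E` sum to zero. Pairing with the
stationary distributions (`μ (1 - Q) = μⱼ eⱼ`) shows that this column is `μⱼ μ̃ₙ / (μₙ μ̃ⱼ)` times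
the `n`-th column of `(1 - Q)⁻¹`, which is `μₙ (T i j + T j n - T i n) + δᵢₙ ≤ 2 D' μₙ` by Kac's
formula `μₙ Tₙₙ = 1`. No inverse is ever formed: a minimum principle for `1 - Q̃`, with the
positive solution `T̃·j` as barrier, gives the uniqueness that these identifications need.
-/

open Matrix

theorem abs_sum_mul_le_of_sum_eq_zero {ι : Type*} [Fintype ι] {e x : ι → ℝ} {D : ℝ}
    (he : ∑ k, e k = 0) (hx : ∀ k, 0 ≤ x k ∧ x k ≤ D) :
    |∑ k, e k * x k| ≤ D / 2 * ∑ k, |e k| := by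
  have hcenter : ∑ k, e k * x k = ∑ k, e k * (x k - D / 2) := by
    simp only [mul_sub, Finset.sum_sub_distrib, ← Finset.sum_mul, he, zero_mul, sub_zero]
  rw [hcenter, Finset.mul_sum]
  refine (Finset.abs_sum_le_sum_abs _ _).trans (Finset.sum_le_sum fun k _ => ?_)
  rw [abs_mul, mul_comm]
  exact mul_le_mul_of_nonneg_right (abs_le.mpr ⟨by linarith [hx k], by linarith [hx k]⟩)
    (abs_nonneg _)

section SquareMatrix

variable {ι : Type*} [Fintype ι] [DecidableEq ι] {Q Q' : Matrix ι ι ℝ} {t : ι → ℝ} {n : ι}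

/-- Minimum principle: at a minimiser of `v i / t i = r < 0` we would get
`v ≥ Q v ≥ r Q t = r (t - 1) > r t = v`. -/
theorem nonneg_of_one_sub_mulVec_nonneg (hQ : ∀ i k, 0 ≤ Q i k) (ht : ∀ i, 0 < t i)
    (hQt : (1 - Q) *ᵥ t = 1) {v : ι → ℝ} (hv : 0 ≤ (1 - Q) *ᵥ v) : 0 ≤ v := by
  intro i₁
  by_contra! hneg
  obtain ⟨i₀, -, hmin⟩ := Finset.univ.exists_min_image (fun i => v i / t i) ⟨i₁, Finset.mem_univ _⟩
  set r := v i₀ / t i₀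
  have hr : r < 0 := (hmin i₁ (Finset.mem_univ _)).trans_lt (div_neg_of_neg_of_pos hneg (ht i₁))
  have hrt : ∀ i, r * t i ≤ v i := fun i =>
    (le_div_iff₀ (ht i)).mp (hmin i (Finset.mem_univ _))
  have hQv : r * (Q *ᵥ t) i₀ ≤ (Q *ᵥ v) i₀ := by
    simp only [mulVec, dotProduct, Finset.mul_sum]
    exact Finset.sum_le_sum fun k _ => by nlinarith [hQ i₀ k, hrt k]
  have ht₀ := congrFun hQt i₀
  have hv₀ := hv i₀
  simp only [sub_mulVec, one_mulVec, Pi.sub_apply, Pi.one_apply, Pi.zero_apply] at ht₀ hv₀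
  have : v i₀ = r * t i₀ := (div_mul_cancel₀ _ (ht i₀).ne').symm
  nlinarith

theorem one_sub_mulVec_injective (hQ : ∀ i k, 0 ≤ Q i k) (ht : ∀ i, 0 < t i)
    (hQt : (1 - Q) *ᵥ t = 1) : Function.Injective ((1 - Q) *ᵥ ·) := by
  intro x y hxy
  have h : (1 - Q) *ᵥ (x - y) = 0 := by simp only [mulVec_sub, hxy, sub_self]
  have h₁ := nonneg_of_one_sub_mulVec_nonneg hQ ht hQt (v := x - y) (by rw [h])
  have h₂ := nonneg_of_one_sub_mulVec_nonneg hQ ht hQt (v := y - x)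
    (by rw [← neg_sub x y, mulVec_neg, h, neg_zero])
  exact le_antisymm (sub_nonneg.mp h₂) (sub_nonneg.mp h₁)

theorem one_sub_mulVec_eq_of_eq_off_row (hrow : ∀ i, i ≠ n → Q i = Q' i) (x : ι → ℝ) :
    (1 - Q') *ᵥ x = (1 - Q) *ᵥ x - Pi.single n (((Q' - Q) *ᵥ x) n) := by
  ext i
  by_cases hi : i = n
  · subst hi
    simp only [sub_mulVec, Pi.sub_apply, Pi.single_eq_same]
    ring
  · simp only [sub_mulVec, Pi.sub_apply, Pi.single_eq_of_ne hi, sub_zero]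
    change _ - Q' i ⬝ᵥ x = _ - Q i ⬝ᵥ x
    rw [hrow i hi]

/-- Sherman–Morrison for a change of row `n`: solutions move along the `n`-th column `w` of
`(1 - Q)⁻¹`. -/
theorem smul_sub_eq_smul_of_eq_off_row (hrow : ∀ i, i ≠ n → Q i = Q' i)
    (hinj : Function.Injective ((1 - Q') *ᵥ ·)) {w x x' b : ι → ℝ}
    (hw : (1 - Q) *ᵥ w = Pi.single n 1) (hx : (1 - Q) *ᵥ x = b) (hx' : (1 - Q') *ᵥ x' = b) :
    (1 - ((Q' - Q) *ᵥ w) n) • (x' - x) = ((Q' - Q) *ᵥ x) n • w := by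
  apply hinj
  dsimp only
  rw [mulVec_smul, mulVec_sub, hx', one_sub_mulVec_eq_of_eq_off_row hrow x, hx, mulVec_smul,
    one_sub_mulVec_eq_of_eq_off_row hrow w, hw]
  ext i
  by_cases hi : i = n
  · subst hi
    simp only [sub_sub_cancel, Pi.smul_apply, Pi.single_eq_same, smul_eq_mul, Pi.sub_apply]
    ring
  · simp [Pi.single_eq_of_ne hi]

theorem updateCol_zero_mulVec (P : Matrix ι ι ℝ) (j : ι) (x : ι → ℝ) :
    updateCol P j 0 *ᵥ x = P *ᵥ Function.update x j 0 := by
  ext i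
  simp only [mulVec, dotProduct, updateCol_apply, Function.update_apply]
  refine Finset.sum_congr rfl fun k _ => ?_
  split_ifs <;> simp

theorem updateCol_zero_mulVec_apply (P : Matrix ι ι ℝ) (j : ι) (x : ι → ℝ) (i : ι) :
    (updateCol P j 0 *ᵥ x) i = (P *ᵥ x) i - P i j * x j := by
  have hx : Function.update x j 0 = x - Pi.single j (x j) := by
    ext k
    by_cases hk : k = j
    · subst hk; simp
    · simp [hk]
  rw [updateCol_zero_mulVec, hx, mulVec_sub, mulVec_single]
  simp [mul_comm]

end SquareMatrix

section Markov

variable {S : ℕ} {P T : Matrix (Fin S) (Fin S) ℝ} {μ : Fin S → ℝ}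

theorem abs_le_matNormInf (E : Matrix (Fin S) (Fin S) ℝ) (a b : Fin S) :
    |E a b| ≤ matNormInf E :=
  (le_ciSup (Set.finite_range fun j => |E a j|).bddAbove b).trans
    (le_ciSup (Set.finite_range fun i => ⨆ j, |E i j|).bddAbove a)

theorem IsMFPT.apply_eq (hT : IsMFPT P T) (i j : Fin S) :
    T i j = 1 + (P *ᵥ fun k => T k j) i - P i j * T j j := by
  rw [hT.2 i j, Finset.filter_ne', Finset.sum_erase_eq_sub (Finset.mem_univ j), add_sub_assoc]
  rfl

theorem IsMFPT.one_sub_updateCol_mulVec (hT : IsMFPT P T) (j : Fin S) :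
    (1 - updateCol P j 0) *ᵥ (fun i => T i j) = 1 := by
  ext i
  rw [sub_mulVec, one_mulVec, Pi.sub_apply, updateCol_zero_mulVec_apply, Pi.one_apply,
    hT.apply_eq i j]
  ring

/-- Stationarity of `μ` says exactly `μ ᵥ* (1 - updateCol P j 0) = Pi.single j (μ j)`. -/
theorem IsStationaryDist.mul_apply_eq_dotProduct (hμ : IsStationaryDist P μ) (j : Fin S)
    (w : Fin S → ℝ) : μ j * w j = μ ⬝ᵥ ((1 - updateCol P j 0) *ᵥ w) := by
  have hμQ : μ ᵥ* (1 - updateCol P j 0) = Pi.single j (μ j) := by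
    ext k
    rw [vecMul_sub, vecMul_one, Pi.sub_apply]
    by_cases hk : k = j
    · subst hk
      simp [vecMul, dotProduct]
    · simp only [vecMul, dotProduct, updateCol_apply, hk, if_false, Pi.single_eq_of_ne hk]
      rw [hμ.2.2 k, sub_self]
  rw [dotProduct_mulVec, hμQ, single_dotProduct]

theorem IsMFPT.stationary_mul_self_eq_one (hT : IsMFPT P T) (hμ : IsStationaryDist P μ)
    (m : Fin S) : μ m * T m m = 1 := by
  rw [hμ.mul_apply_eq_dotProduct m fun i => T i m, hT.one_sub_updateCol_mulVec m]
  simpa [dotProduct] using hμ.2.1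

theorem IsMFPT.stationary_pos (hT : IsMFPT P T) (hμ : IsStationaryDist P μ) (m : Fin S) :
    0 < μ m :=
  pos_of_mul_pos_left (by rw [hT.stationary_mul_self_eq_one hμ m]; exact one_pos) (hT.1 m m).le

theorem RowStochastic.updateCol_nonneg (hP : RowStochastic P) (j i k : Fin S) :
    0 ≤ updateCol P j 0 i k := by
  rw [updateCol_apply]
  split_ifs
  exacts [le_rfl, hP.1 i k]

/-- The `n`-th column of `(1 - updateCol P j 0)⁻¹`, i.e. the expected number of visits to `n ≠ j`
before reaching `j`, is `μ n (T i j + T j n - T i n) + δ i n`. -/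
theorem IsMFPT.one_sub_updateCol_mulVec_occupation (hP : RowStochastic P) (hT : IsMFPT P T)
    (hμ : IsStationaryDist P μ) {j n : Fin S} (hnj : n ≠ j) :
    (1 - updateCol P j 0) *ᵥ
        (μ n • ((fun i => T i j) + T j n • 1 - fun i => T i n) + Pi.single n 1) =
      Pi.single n 1 := by
  ext i
  have hP1 : (P *ᵥ 1) i = 1 := by simpa [mulVec, dotProduct] using hP.2 i
  have hkac := hT.stationary_mul_self_eq_one hμ n
  rw [sub_mulVec, one_mulVec, Pi.sub_apply, updateCol_zero_mulVec_apply]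
  simp only [mulVec_add, mulVec_smul, mulVec_sub, mulVec_single_one, Pi.add_apply,
    Pi.smul_apply, Pi.sub_apply, smul_eq_mul, Pi.one_apply, col_apply, hP1,
    Pi.single_eq_of_ne hnj.symm]
  linear_combination μ n * hT.apply_eq i j - μ n * hT.apply_eq i n + P i n * hkac

theorem IsMFPT.exists_occupation (hP : RowStochastic P) (hT : IsMFPT P T)
    (hμ : IsStationaryDist P μ) (j n : Fin S) :
    ∃ w : Fin S → ℝ, (1 - updateCol P j 0) *ᵥ w = Pi.single n 1 ∧
      ∀ i, 0 ≤ w i ∧ w i ≤ μ n * (T i j + T j n) := by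
  have hkac := hT.stationary_mul_self_eq_one hμ n
  have hμT : ∀ i, 0 ≤ μ n * T i n :=
    fun i => mul_nonneg (hT.stationary_pos hμ n).le (hT.1 i n).le
  have hle : ∀ i, (Pi.single n 1 : Fin S → ℝ) i ≤ μ n * T i n := by
    intro i
    by_cases hi : i = n
    · subst hi; simp [hkac]
    · simp [Pi.single_eq_of_ne hi, hμT i]
  obtain ⟨w, hw, hw_le⟩ : ∃ w : Fin S → ℝ, (1 - updateCol P j 0) *ᵥ w = Pi.single n 1 ∧
      ∀ i, w i ≤ μ n * (T i j + T j n) := by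
    by_cases hnj : n = j
    · subst hnj
      refine ⟨Pi.single n 1, ?_, fun i => by linarith [hle i]⟩
      ext i
      simp [one_apply, Pi.single_apply]
    · refine ⟨_, hT.one_sub_updateCol_mulVec_occupation hP hμ hnj, fun i => ?_⟩
      simp only [Pi.add_apply, Pi.smul_apply, Pi.sub_apply, smul_eq_mul, Pi.one_apply, mul_one]
      linarith [hle i]
  refine ⟨w, hw, fun i => ⟨?_, hw_le i⟩⟩
  refine nonneg_of_one_sub_mulVec_nonneg (hP.updateCol_nonneg j) (fun i => hT.1 i j)
    (hT.one_sub_updateCol_mulVec j) ?_ i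
  rw [hw]
  exact Pi.single_nonneg.mpr zero_le_one

end Markov

section Perturbation

variable {S : ℕ} {P Pt T Tt : Matrix (Fin S) (Fin S) ℝ} {μ μt : Fin S → ℝ}

theorem abs_updateCol_sub_mulVec_apply_le (hP : RowStochastic P) (hPt : RowStochastic Pt)
    (j n : Fin S) {x : Fin S → ℝ} {D : ℝ} (hx : ∀ k, 0 ≤ x k ∧ x k ≤ D) :
    |((updateCol Pt j 0 - updateCol P j 0) *ᵥ x) n| ≤ S * matNormInf (Pt - P) * (D / 2) := by
  have hD : 0 ≤ D := (hx n).1.trans (hx n).2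
  have he : ∑ k, (Pt - P) n k = 0 := by simp [Finset.sum_sub_distrib, hP.2, hPt.2]
  have hy : ∀ k, 0 ≤ Function.update x j 0 k ∧ Function.update x j 0 k ≤ D := by
    intro k
    by_cases hk : k = j
    · subst hk; simp [hD]
    · simpa [hk] using hx k
  rw [sub_mulVec, updateCol_zero_mulVec, updateCol_zero_mulVec, ← sub_mulVec]
  calc |((Pt - P) *ᵥ Function.update x j 0) n| ≤ D / 2 * ∑ k, |(Pt - P) n k| :=
        abs_sum_mul_le_of_sum_eq_zero he hy
    _ ≤ D / 2 * ∑ _k : Fin S, matNormInf (Pt - P) := by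
        gcongr with k; exact abs_le_matNormInf _ n k
    _ = S * matNormInf (Pt - P) * (D / 2) := by
        simp only [Finset.sum_const, Finset.card_univ, Fintype.card_fin, nsmul_eq_mul]
        ring

theorem mfpt_sub_mul_eq_of_eq_off_row (hPt : RowStochastic Pt) {n : Fin S}
    (hrow : ∀ i, i ≠ n → ∀ k, P i k = Pt i k)
    (hμ : IsStationaryDist P μ) (hμt : IsStationaryDist Pt μt)
    (hT : IsMFPT P T) (hTt : IsMFPT Pt Tt) {j : Fin S} {w : Fin S → ℝ}
    (hw : (1 - updateCol P j 0) *ᵥ w = Pi.single n 1) (i : Fin S) :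
    (Tt i j - T i j) * (μt j * μ n) =
      ((updateCol Pt j 0 - updateCol P j 0) *ᵥ fun k => T k j) n * w i * (μ j * μt n) := by
  have hrowQ : ∀ i, i ≠ n → updateCol P j 0 i = updateCol Pt j 0 i := by
    intro i hi
    ext k
    simp only [updateCol_apply, hrow i hi k]
  have hinj := one_sub_mulVec_injective (hPt.updateCol_nonneg j) (fun i => hTt.1 i j)
    (hTt.one_sub_updateCol_mulVec j)
  have hΔ := congrFun (smul_sub_eq_smul_of_eq_off_row hrowQ hinj hw
    (hT.one_sub_updateCol_mulVec j) (hTt.one_sub_updateCol_mulVec j)) i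
  set a := ((updateCol Pt j 0 - updateCol P j 0) *ᵥ w) n
  have hμw : μ j * w j = μ n := by
    rw [hμ.mul_apply_eq_dotProduct j w, hw, dotProduct_single, mul_one]
  have hμtw : μt j * w j = (1 - a) * μt n := by
    rw [hμt.mul_apply_eq_dotProduct j w, one_sub_mulVec_eq_of_eq_off_row hrowQ w, hw,
      ← Pi.single_sub, dotProduct_single, mul_comm]
  simp only [Pi.smul_apply, Pi.sub_apply, smul_eq_mul] at hΔ
  linear_combination (-(Tt i j - T i j) * μt j) * hμw + (Tt i j - T i j) * μ j * hμtw
    + μ j * μt n * hΔ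

end Perturbation

theorem mfpt_single_row_perturbation_general
    {S : ℕ}
    (P Pt : Matrix (Fin S) (Fin S) ℝ)
    (hP : RowStochastic P) (hPt : RowStochastic Pt)
    (n : Fin S)
    (hrow : ∀ i, i ≠ n → ∀ k, P i k = Pt i k)
    (μ μt : Fin S → ℝ)
    (hμ : IsStationaryDist P μ) (hμt : IsStationaryDist Pt μt)
    (T Tt : Matrix (Fin S) (Fin S) ℝ)
    (hT : IsMFPT P T) (hTt : IsMFPT Pt Tt)
    (D' : ℝ)
    (hTD : ∀ i j, T i j ≤ D') :
    ∀ i j, i ≠ j →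
      |Tt i j - T i j| ≤ (μ j / μt j) * matNormInf (Pt - P) * S * D' ^ 2 := by
  intro i j _
  obtain ⟨w, hw, hw_bd⟩ := hT.exists_occupation hP hμ j n
  set c := ((updateCol Pt j 0 - updateCol P j 0) *ᵥ fun k => T k j) n
  have hc : |c| ≤ S * matNormInf (Pt - P) * (D' / 2) :=
    abs_updateCol_sub_mulVec_apply_le hP hPt j n fun k => ⟨(hT.1 k j).le, hTD k j⟩
  have hμj := hT.stationary_pos hμ j
  have hμn := hT.stationary_pos hμ n
  have hμtj := hTt.stationary_pos hμt j
  have hμtn := hTt.stationary_pos hμt n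
  have hμtn_le : μt n ≤ 1 :=
    hμt.2.1 ▸ Finset.single_le_sum (fun k _ => hμt.1 k) (Finset.mem_univ n)
  have hwi : w i ≤ μ n * (2 * D') := (hw_bd i).2.trans (by gcongr; linarith [hTD i j, hTD j n])
  have hcw : |c| * w i ≤ S * matNormInf (Pt - P) * (D' / 2) * (μ n * (2 * D')) :=
    mul_le_mul hc hwi (hw_bd i).1 ((abs_nonneg c).trans hc)
  refine le_of_mul_le_mul_right ?_ (mul_pos hμtj hμn)
  calc |Tt i j - T i j| * (μt j * μ n) = |c| * w i * (μ j * μt n) := by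
        rw [← abs_of_pos (mul_pos hμtj hμn), ← abs_mul,
          mfpt_sub_mul_eq_of_eq_off_row hPt hrow hμ hμt hT hTt hw i, abs_mul, abs_mul,
          abs_of_nonneg (hw_bd i).1, abs_of_pos (mul_pos hμj hμtn)]
    _ ≤ S * matNormInf (Pt - P) * (D' / 2) * (μ n * (2 * D')) * (μ j * 1) :=
        mul_le_mul hcw (by gcongr) (mul_pos hμj hμtn).le
          ((mul_nonneg (abs_nonneg c) (hw_bd i).1).trans hcw)
    _ = (μ j / μt j) * matNormInf (Pt - P) * S * D' ^ 2 * (μt j * μ n) := by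
        field_simp

/-- Single-row perturbation bound for mean first passage times: if irreducible
row-stochastic `P` and `P̃` differ only in their `n`-th row and all mean first passage
times of `P` are at most `D′`, then for all `i ≠ j`,
`|T̃_{ij} − T_{ij}| ≤ (μ_j / μ̃_j) · ‖E‖_∞ · S · D′²`. -/
theorem mfpt_single_row_perturbation
    {S : ℕ}
    (P Pt : Matrix (Fin S) (Fin S) ℝ)
    (hP : RowStochastic P) (hPt : RowStochastic Pt)
    (hirr : MCIrreducible P) (hirrt : MCIrreducible Pt)
    (n : Fin S)
    (hrow : ∀ i, i ≠ n → ∀ k, P i k = Pt i k)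
    (μ μt : Fin S → ℝ)
    (hμ : IsStationaryDist P μ) (hμt : IsStationaryDist Pt μt)
    (T Tt : Matrix (Fin S) (Fin S) ℝ)
    (hT : IsMFPT P T) (hTt : IsMFPT Pt Tt)
    (D' : ℝ) (hD' : 1 ≤ D')
    (hTD : ∀ i j, T i j ≤ D') :
    ∀ i j, i ≠ j →
      |Tt i j - T i j| ≤ (μ j / μt j) * matNormInf (Pt - P) * S * D' ^ 2 :=
  mfpt_single_row_perturbation_general P Pt hP hPt n hrow μ μt hμ hμt T Tt hT hTt D' hTD
end
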